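/- arXiv:math/9903143 — 2 statements merged into one kernel-verified Lean document; each statement's English description precedes it below -/
import Mathlib

section
/- Let k be a field and q ∈ k^×. The set of coinvariants of γ, namely {w ∈ O_q(k^m) ⊗_k O_q(k^n) : γ(w) = 1 ⊗ w}, is exactly the image of the algebra O_q(M_{m,n}(k)) in O_q(k^m) ⊗_k O_q(k^n) under the homomorphism θ. -/
open scoped TensorProduct

noncomputable section

/-- Defining relations of the coordinate ring `O_q(k^n)` of quantum affine `n`-space:
`y_i y_j = q y_j y_i` for `i < j`. -/
inductive AffRel (k : Type) [Field k] (q : k) (n : ℕ) :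
    FreeAlgebra k (Fin n) → FreeAlgebra k (Fin n) → Prop
  | rel : ∀ {i j : Fin n}, i < j →
      AffRel k q n (FreeAlgebra.ι k i * FreeAlgebra.ι k j)
        (q • (FreeAlgebra.ι k j * FreeAlgebra.ι k i))

/-- The coordinate ring `O_q(k^n)` of quantum affine `n`-space. -/
abbrev QAff (k : Type) [Field k] (q : k) (n : ℕ) : Type := RingQuot (AffRel k q n)

/-- The canonical generators `y_1, …, y_n` of `O_q(k^n)`. -/
def affGen (k : Type) [Field k] (q : k) (n : ℕ) (i : Fin n) : QAff k q n :=
  RingQuot.mkAlgHom k (AffRel k q n) (FreeAlgebra.ι k i)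

/-- Defining relations of the coordinate ring `O_q(M_{m,n}(k))` of quantum `m × n` matrices. -/
inductive MatRel (k : Type) [Field k] (q : k) (m n : ℕ) :
    FreeAlgebra k (Fin m × Fin n) → FreeAlgebra k (Fin m × Fin n) → Prop
  | col : ∀ {i l : Fin m} {j : Fin n}, i < l →
      MatRel k q m n (FreeAlgebra.ι k (i, j) * FreeAlgebra.ι k (l, j))
        (q • (FreeAlgebra.ι k (l, j) * FreeAlgebra.ι k (i, j)))
  | row : ∀ {i : Fin m} {j s : Fin n}, j < s →
      MatRel k q m n (FreeAlgebra.ι k (i, j) * FreeAlgebra.ι k (i, s))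
        (q • (FreeAlgebra.ι k (i, s) * FreeAlgebra.ι k (i, j)))
  | comm : ∀ {i l : Fin m} {j s : Fin n}, i < l → j < s →
      MatRel k q m n (FreeAlgebra.ι k (i, s) * FreeAlgebra.ι k (l, j))
        (FreeAlgebra.ι k (l, j) * FreeAlgebra.ι k (i, s))
  | mixed : ∀ {i l : Fin m} {j s : Fin n}, i < l → j < s →
      MatRel k q m n
        (FreeAlgebra.ι k (i, j) * FreeAlgebra.ι k (l, s) -
          FreeAlgebra.ι k (l, s) * FreeAlgebra.ι k (i, j))
        ((q - q⁻¹) • (FreeAlgebra.ι k (i, s) * FreeAlgebra.ι k (l, j)))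

/-- The coordinate ring `O_q(M_{m,n}(k))` of quantum `m × n` matrices. -/
abbrev QMat (k : Type) [Field k] (q : k) (m n : ℕ) : Type := RingQuot (MatRel k q m n)

/-- The canonical generators `X i j` of `O_q(M_{m,n}(k))`. -/
def X (k : Type) [Field k] (q : k) (m n : ℕ) (i : Fin m) (j : Fin n) : QMat k q m n :=
  RingQuot.mkAlgHom k (MatRel k q m n) (FreeAlgebra.ι k (i, j))

/-- The two-sided ideal `I₁` of `O_q(M_{m,n}(k))` generated by the `2 × 2` quantum minors
`X_{ij} X_{ls} - q X_{is} X_{lj}` for `i < l`, `j < s`. -/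
def I₁ (k : Type) [Field k] (q : k) (m n : ℕ) : TwoSidedIdeal (QMat k q m n) :=
  TwoSidedIdeal.span
    { a | ∃ (i l : Fin m) (j s : Fin n), i < l ∧ j < s ∧
        a = X k q m n i j * X k q m n l s - q • (X k q m n i s * X k q m n l j) }

/-- The monomial `X_{i₁j₁} X_{i₂j₂} ⋯ X_{iₗjₗ}` associated to a list of index pairs. -/
def matMono (k : Type) [Field k] (q : k) (m n : ℕ) (L : List (Fin m × Fin n)) :
    QMat k q m n :=
  (L.map fun p => X k q m n p.1 p.2).prod

/-- A list of index pairs is *ordered* if the row indices are non-increasing and the column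
indices are non-decreasing, i.e. `i₁ ≥ i₂ ≥ ⋯ ≥ iₗ` and `j₁ ≤ j₂ ≤ ⋯ ≤ jₗ`. -/
def OrderedIdx {m n : ℕ} (L : List (Fin m × Fin n)) : Prop :=
  L.Chain' fun p p' => p'.1 ≤ p.1 ∧ p.2 ≤ p'.2

/-! The map `γ` grades `O_q(k^m) ⊗ O_q(k^n)` by `ℤ`, with `y_i` in degree `-1` and `z_j` in
degree `1`, and the coinvariants are the degree-zero part. The products `y_a ⊗ z_b` of monomials
span, `y_a ⊗ z_b` is homogeneous of degree `|b| - |a|`, and when `|a| = |b|` it is the image under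
`θ` of `X_{a₁b₁} ⋯ X_{aₗbₗ}`. So taking the coefficient of `T^0` in `γ w` lands in the image of
`θ`, and returns `w` when `w` is a coinvariant. Conversely `γ ∘ θ` and `1 ⊗ θ` agree on the
generators `X_{ij}`. -/

theorem Algebra.TensorProduct.list_prod_map_tmul {R A B ι : Type*} [CommSemiring R]
    [Semiring A] [Semiring B] [Algebra R A] [Algebra R B] (a : ι → A) (b : ι → B) (L : List ι) :
    (L.map fun i => a i ⊗ₜ[R] b i).prod = (L.map a).prod ⊗ₜ (L.map b).prod := by
  induction L with
  | nil => rfl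
  | cons i L ih => simp [ih, Algebra.TensorProduct.tmul_mul_tmul]

theorem Algebra.span_range_list_prod_eq_top {R A ι : Type*} [CommSemiring R] [Semiring A]
    [Algebra R A] {g : ι → A} (h : Algebra.adjoin R (Set.range g) = ⊤) :
    Submodule.span R (Set.range fun L : List ι => (L.map g).prod) = ⊤ := by
  rw [← Algebra.top_toSubmodule, ← h, Algebra.adjoin_eq_span, ← FreeMonoid.mrange_lift,
    MonoidHom.coe_mrange, ← FreeMonoid.ofList.surjective.range_comp]
  simp only [Function.comp_def, FreeMonoid.lift_apply, FreeMonoid.toList_ofList]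

theorem TensorProduct.span_image2_tmul_eq_top {R M N : Type*} [CommSemiring R]
    [AddCommMonoid M] [AddCommMonoid N] [Module R M] [Module R N] {s : Set M} {t : Set N}
    (hs : Submodule.span R s = ⊤) (ht : Submodule.span R t = ⊤) :
    Submodule.span R (Set.image2 (· ⊗ₜ[R] ·) s t) = ⊤ := by
  have h := Submodule.map₂_span_span R (TensorProduct.mk R M N) s t
  rw [hs, ht, TensorProduct.map₂_mk_top_top_eq_top] at h
  simpa using h.symm

theorem adjoin_range_affGen (k : Type) [Field k] (q : k) (n : ℕ) :
    Algebra.adjoin k (Set.range (affGen k q n)) = ⊤ := by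
  rw [show Set.range (affGen k q n) = RingQuot.mkAlgHom k (AffRel k q n) '' Set.range
      (FreeAlgebra.ι k) by rw [← Set.range_comp]; rfl, Algebra.adjoin_image,
    FreeAlgebra.adjoin_range_ι, Algebra.map_top, AlgHom.range_eq_top]
  exact RingQuot.mkAlgHom_surjective k _

theorem QMat.algHom_ext {k : Type} [Field k] {q : k} {m n : ℕ} {C : Type*} [Semiring C]
    [Algebra k C] {f g : QMat k q m n →ₐ[k] C} (h : ∀ i j, f (X k q m n i j) = g (X k q m n i j)) :
    f = g :=
  RingQuot.ringQuot_ext' _ _ _ <| FreeAlgebra.hom_ext <| funext fun p => h p.1 p.2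

namespace LaurentPolynomial

variable {R V : Type*} [CommSemiring R] [AddCommMonoid V] [Module R V]

variable (R V) in
def degreeZeroPart : R[T;T⁻¹] ⊗[R] V →ₗ[R] V :=
  TensorProduct.lid R V ∘ₗ LinearMap.rTensor V
    (Finsupp.lapply 0 ∘ₗ (AddMonoidAlgebra.coeffLinearEquiv R).toLinearMap)

theorem degreeZeroPart_T_tmul (d : ℤ) (v : V) :
    degreeZeroPart R V (T d ⊗ₜ v) = if d = 0 then v else 0 := by
  simp [degreeZeroPart, AddMonoidAlgebra.coeffLinearEquiv]

theorem degreeZeroPart_one_tmul (v : V) : degreeZeroPart R V (1 ⊗ₜ v) = v := by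
  simpa using degreeZeroPart_T_tmul (R := R) 0 v

theorem map_list_prod_eq_T_tmul {A C ι : Type*} [Semiring A] [Semiring C] [Algebra R A]
    [Algebra R C] (φ : A →ₐ[R] R[T;T⁻¹] ⊗[R] C) (ψ : A →ₐ[R] C) {g : ι → A} {d : ℤ}
    (h : ∀ i, φ (g i) = T d ⊗ₜ ψ (g i)) (L : List ι) :
    φ (L.map g).prod = T (L.length * d) ⊗ₜ ψ (L.map g).prod := by
  induction L with
  | nil => simp [Algebra.TensorProduct.one_def]
  | cons i L ih =>
    simp only [List.map_cons, List.prod_cons, map_mul, h, ih, Algebra.TensorProduct.tmul_mul_tmul,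
      ← T_add, List.length_cons]
    push_cast
    ring_nf

end LaurentPolynomial

section Coinvariants

open LaurentPolynomial

variable {k : Type} [Field k] {q : k} {m n : ℕ} {A B : Type*} [Semiring A] [Semiring B]
  [Algebra k A] [Algebra k B] {y : Fin m → A} {z : Fin n → B}

theorem theta_matMono {θ : QMat k q m n →ₐ[k] A ⊗[k] B}
    (hθ : ∀ i j, θ (X k q m n i j) = y i ⊗ₜ z j) (L : List (Fin m × Fin n)) :
    θ (matMono k q m n L) = (L.map (y ∘ Prod.fst)).prod ⊗ₜ (L.map (z ∘ Prod.snd)).prod := by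
  simp only [matMono, map_list_prod, List.map_map, Function.comp_def, hθ]
  exact Algebra.TensorProduct.list_prod_map_tmul _ _ L

theorem tmul_list_prod_mem_range {θ : QMat k q m n →ₐ[k] A ⊗[k] B}
    (hθ : ∀ i j, θ (X k q m n i j) = y i ⊗ₜ z j) {a : List (Fin m)} {b : List (Fin n)}
    (hab : a.length = b.length) : (a.map y).prod ⊗ₜ[k] (b.map z).prod ∈ Set.range θ :=
  ⟨matMono k q m n (a.zip b), by
    rw [theta_matMono hθ, ← List.map_map, ← List.map_map, List.map_fst_zip hab.le,
      List.map_snd_zip hab.ge]⟩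

theorem gamma_tmul_list_prod {γ : A ⊗[k] B →ₐ[k] k[T;T⁻¹] ⊗[k] (A ⊗[k] B)}
    (hγy : ∀ i, γ (y i ⊗ₜ 1) = T (-1) ⊗ₜ (y i ⊗ₜ 1))
    (hγz : ∀ j, γ (1 ⊗ₜ z j) = T 1 ⊗ₜ (1 ⊗ₜ z j)) (a : List (Fin m)) (b : List (Fin n)) :
    γ ((a.map y).prod ⊗ₜ (b.map z).prod) =
      T (b.length - a.length) ⊗ₜ ((a.map y).prod ⊗ₜ (b.map z).prod) := by
  have hl := map_list_prod_eq_T_tmul (γ.comp Algebra.TensorProduct.includeLeft)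
    Algebra.TensorProduct.includeLeft hγy a
  have hr := map_list_prod_eq_T_tmul (γ.comp Algebra.TensorProduct.includeRight)
    Algebra.TensorProduct.includeRight hγz b
  simp only [AlgHom.comp_apply, Algebra.TensorProduct.includeLeft_apply,
    Algebra.TensorProduct.includeRight_apply] at hl hr
  rw [← mul_one ((a.map y).prod), ← one_mul ((b.map z).prod),
    ← Algebra.TensorProduct.tmul_mul_tmul, map_mul, hl, hr, Algebra.TensorProduct.tmul_mul_tmul,
    ← T_add]
  congr 2
  ring

theorem gamma_comp_theta {θ : QMat k q m n →ₐ[k] A ⊗[k] B}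
    (hθ : ∀ i j, θ (X k q m n i j) = y i ⊗ₜ z j)
    {γ : A ⊗[k] B →ₐ[k] k[T;T⁻¹] ⊗[k] (A ⊗[k] B)}
    (hγy : ∀ i, γ (y i ⊗ₜ 1) = T (-1) ⊗ₜ (y i ⊗ₜ 1))
    (hγz : ∀ j, γ (1 ⊗ₜ z j) = T 1 ⊗ₜ (1 ⊗ₜ z j)) :
    γ.comp θ = Algebra.TensorProduct.includeRight.comp θ :=
  QMat.algHom_ext fun i j => by
    simpa [hθ] using gamma_tmul_list_prod hγy hγz [i] [j]

theorem range_degreeZeroPart_comp_le {θ : QMat k q m n →ₐ[k] A ⊗[k] B}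
    (hy : Algebra.adjoin k (Set.range y) = ⊤) (hz : Algebra.adjoin k (Set.range z) = ⊤)
    (hθ : ∀ i j, θ (X k q m n i j) = y i ⊗ₜ z j)
    {γ : A ⊗[k] B →ₐ[k] k[T;T⁻¹] ⊗[k] (A ⊗[k] B)}
    (hγy : ∀ i, γ (y i ⊗ₜ 1) = T (-1) ⊗ₜ (y i ⊗ₜ 1))
    (hγz : ∀ j, γ (1 ⊗ₜ z j) = T 1 ⊗ₜ (1 ⊗ₜ z j)) :
    LinearMap.range (degreeZeroPart k (A ⊗[k] B) ∘ₗ γ.toLinearMap) ≤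
      Subalgebra.toSubmodule θ.range := by
  rw [LinearMap.range_eq_map, ← TensorProduct.span_image2_tmul_eq_top
    (Algebra.span_range_list_prod_eq_top hy) (Algebra.span_range_list_prod_eq_top hz),
    Submodule.map_span_le]
  rintro _ ⟨_, ⟨a, rfl⟩, _, ⟨b, rfl⟩, rfl⟩
  rw [LinearMap.comp_apply, AlgHom.toLinearMap_apply, gamma_tmul_list_prod hγy hγz,
    degreeZeroPart_T_tmul]
  split_ifs with hab
  · exact tmul_list_prod_mem_range hθ (by omega)
  · exact zero_mem _

theorem coinvariants_eq_range_of_adjoin_eq_top {θ : QMat k q m n →ₐ[k] A ⊗[k] B}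
    (hy : Algebra.adjoin k (Set.range y) = ⊤) (hz : Algebra.adjoin k (Set.range z) = ⊤)
    (hθ : ∀ i j, θ (X k q m n i j) = y i ⊗ₜ z j)
    {γ : A ⊗[k] B →ₐ[k] k[T;T⁻¹] ⊗[k] (A ⊗[k] B)}
    (hγy : ∀ i, γ (y i ⊗ₜ 1) = T (-1) ⊗ₜ (y i ⊗ₜ 1))
    (hγz : ∀ j, γ (1 ⊗ₜ z j) = T 1 ⊗ₜ (1 ⊗ₜ z j)) :
    {w | γ w = 1 ⊗ₜ w} = Set.range θ := by
  ext w
  constructor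
  · intro hw
    have hproj : degreeZeroPart k _ (γ w) = w := by rw [hw, degreeZeroPart_one_tmul]
    rw [← AlgHom.coe_range, ← hproj]
    exact range_degreeZeroPart_comp_le hy hz hθ hγy hγz ⟨w, rfl⟩
  · rintro ⟨x, rfl⟩
    exact DFunLike.congr_fun (gamma_comp_theta hθ hγy hγz) x

end Coinvariants

theorem coinvariants_eq_image_theta_general (k : Type) [Field k] (q : k) (m n : ℕ)
    (θ : QMat k q m n →ₐ[k] QAff k q m ⊗[k] QAff k q n)
    (hθ : ∀ (i : Fin m) (j : Fin n),
      θ (X k q m n i j) = affGen k q m i ⊗ₜ[k] affGen k q n j)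
    (γ : QAff k q m ⊗[k] QAff k q n →ₐ[k]
      LaurentPolynomial k ⊗[k] (QAff k q m ⊗[k] QAff k q n))
    (hγy : ∀ i : Fin m, γ (affGen k q m i ⊗ₜ[k] 1) =
      LaurentPolynomial.T (-1) ⊗ₜ[k] (affGen k q m i ⊗ₜ[k] 1))
    (hγz : ∀ j : Fin n, γ (1 ⊗ₜ[k] affGen k q n j) =
      LaurentPolynomial.T 1 ⊗ₜ[k] (1 ⊗ₜ[k] affGen k q n j)) :
    { w : QAff k q m ⊗[k] QAff k q n | γ w = 1 ⊗ₜ[k] w } = Set.range θ :=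
  coinvariants_eq_range_of_adjoin_eq_top (adjoin_range_affGen k q m) (adjoin_range_affGen k q n)
    hθ hγy hγz

/-- The set of coinvariants of `γ` is exactly the image of
`O_q(M_{m,n}(k))` under `θ`. -/
theorem coinvariants_eq_image_theta (k : Type) [Field k] (q : k) (hq : q ≠ 0) (m n : ℕ)
    (θ : QMat k q m n →ₐ[k] QAff k q m ⊗[k] QAff k q n)
    (hθ : ∀ (i : Fin m) (j : Fin n),
      θ (X k q m n i j) = affGen k q m i ⊗ₜ[k] affGen k q n j)
    (γ : QAff k q m ⊗[k] QAff k q n →ₐ[k]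
      LaurentPolynomial k ⊗[k] (QAff k q m ⊗[k] QAff k q n))
    (hγy : ∀ i : Fin m, γ (affGen k q m i ⊗ₜ[k] 1) =
      LaurentPolynomial.T (-1) ⊗ₜ[k] (affGen k q m i ⊗ₜ[k] 1))
    (hγz : ∀ j : Fin n, γ (1 ⊗ₜ[k] affGen k q n j) =
      LaurentPolynomial.T 1 ⊗ₜ[k] (1 ⊗ₜ[k] affGen k q n j)) :
    { w : QAff k q m ⊗[k] QAff k q n | γ w = 1 ⊗ₜ[k] w } = Set.range θ :=
  coinvariants_eq_image_theta_general k q m n θ hθ γ hγy hγz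
end
end

section
/- Let k be an infinite field and q ∈ k^×. The H-prime ideals of O_q(M_{m,n}(k)) that contain I_1 are precisely the ideals P(I,J) = I_1 + ⟨X_{ij} : i ∈ I⟩ + ⟨X_{ij} : j ∈ J⟩, where I ranges over subsets of {1, …, m} and J over subsets of {1, …, n}. -/
open scoped TensorProduct

noncomputable section

/-- The ideal `P(I,J) = I₁ + ⟨X_{ij} : i ∈ I⟩ + ⟨X_{ij} : j ∈ J⟩` of `O_q(M_{m,n}(k))`. -/
def PIJ (k : Type) [Field k] (q : k) (m n : ℕ) (I : Finset (Fin m)) (J : Finset (Fin n)) :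
    TwoSidedIdeal (QMat k q m n) :=
  I₁ k q m n ⊔
    TwoSidedIdeal.span { a | ∃ (i : Fin m) (j : Fin n), i ∈ I ∧ a = X k q m n i j } ⊔
    TwoSidedIdeal.span { a | ∃ (i : Fin m) (j : Fin n), j ∈ J ∧ a = X k q m n i j }

/-- A two-sided ideal `P` of `O_q(M_{m,n}(k))` is `H`-invariant for the torus
`H = (k^×)^m × (k^×)^n` if it is stable under every `k`-algebra automorphism sending each
`X i j` to `α_i β_j X i j`. -/
def IsHInvariant (k : Type) [Field k] (q : k) (m n : ℕ)
    (P : TwoSidedIdeal (QMat k q m n)) : Prop :=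
  ∀ (α : Fin m → kˣ) (β : Fin n → kˣ) (φ : QMat k q m n ≃ₐ[k] QMat k q m n),
    (∀ (i : Fin m) (j : Fin n),
      φ (X k q m n i j) = ((α i : k) * (β j : k)) • X k q m n i j) →
    ∀ a ∈ P, φ a ∈ P

/-- A proper `H`-invariant two-sided ideal `P` is `H`-prime if for all `H`-invariant
two-sided ideals `Q`, `R` with `QR ⊆ P` one has `Q ⊆ P` or `R ⊆ P`. -/
def IsHPrime (k : Type) [Field k] (q : k) (m n : ℕ)
    (P : TwoSidedIdeal (QMat k q m n)) : Prop :=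
  IsHInvariant k q m n P ∧ P ≠ ⊤ ∧
    ∀ Q R : TwoSidedIdeal (QMat k q m n),
      IsHInvariant k q m n Q → IsHInvariant k q m n R →
      (∀ a ∈ Q, ∀ b ∈ R, a * b ∈ P) → Q ≤ P ∨ R ≤ P

/-!
Modulo `I₁` the generators commute up to nonzero scalars and can be exchanged along `2 × 2`
minors, so a monomial is determined up to a nonzero scalar by its weight, the multisets of its
row and of its column indices. Over an infinite field an `H`-invariant ideal contains the weight
components of its elements, so an `H`-invariant ideal containing `I₁` is determined by the
monomials it contains.

For an `H`-prime `P ⊇ I₁`, primality applied to ideals generated by monomials, together with the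
dependence on weights only, shows that a monomial lies in `P` only if one of its factors does,
and that `X_{ij} ∈ P` forces `X_{ij'} ∈ P` or `X_{i'j} ∈ P`. Hence the generators in `P` are
those in the rows `I` and the columns `J` consisting of generators in `P`, and `P = P(I,J)`.
Conversely, letting `X_{ij}` act on `O_q(k^m) ⊗ O_q(k^n)` as `y_i ⊗ z_j` kills `I₁` and shows
that a monomial lies in `P(I,J)` only if it has a row in `I` or a column in `J`; since this
condition is additive in the weight, `P(I,J)` is `H`-prime.
-/

namespace TwoSidedIdeal

theorem smul_mem {k A : Type*} [CommSemiring k] [Ring A] [Algebra k A] {I : TwoSidedIdeal A}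
    (c : k) {x : A} (hx : x ∈ I) : c • x ∈ I := by
  rw [Algebra.smul_def]
  exact I.mul_mem_left _ _ hx

theorem mul_mem_of_forall_mul_mul_mem {R : Type*} [Ring R] {P : TwoSidedIdeal R} {x y : R}
    (h : ∀ z, x * z * y ∈ P) {a b : R} (ha : a ∈ span {x}) (hb : b ∈ span {y}) :
    a * b ∈ P := by
  have hy : ∀ z, x * z * b ∈ P := by
    induction hb using span_induction with
    | mem y' hy' => rwa [Set.mem_singleton_iff.1 hy']
    | zero => simp
    | add _ _ _ _ h₁ h₂ => intro z; rw [mul_add]; exact P.add_mem (h₁ z) (h₂ z)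
    | neg _ _ h₁ => intro z; rw [mul_neg]; exact P.neg_mem (h₁ z)
    | left_absorb _ _ _ h₁ => intro z; rw [← mul_assoc, mul_assoc x]; exact h₁ _
    | right_absorb _ _ _ h₁ => intro z; rw [← mul_assoc]; exact P.mul_mem_right _ _ (h₁ z)
  suffices ∀ z, a * z * b ∈ P by simpa using this 1
  induction ha using span_induction with
  | mem x' hx' => rwa [Set.mem_singleton_iff.1 hx']
  | zero => simp
  | add _ _ _ _ h₁ h₂ => intro z; rw [add_mul, add_mul]; exact P.add_mem (h₁ z) (h₂ z)
  | neg _ _ h₁ => intro z; rw [neg_mul, neg_mul]; exact P.neg_mem (h₁ z)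
  | left_absorb c _ _ h₁ =>
    intro z
    rw [mul_assoc c, mul_assoc c]
    exact P.mul_mem_left _ _ (by simpa [mul_assoc] using h₁ z)
  | right_absorb c _ _ h₁ => intro z; simpa [mul_assoc] using h₁ (c * z)

end TwoSidedIdeal

def AssocMod (k : Type*) {A : Type*} [Field k] [Ring A] [Algebra k A] (I : TwoSidedIdeal A)
    (u v : A) : Prop :=
  ∃ c : k, c ≠ 0 ∧ u - c • v ∈ I

namespace AssocMod

variable {k A : Type*} [Field k] [Ring A] [Algebra k A] {I : TwoSidedIdeal A} {u v w : A}

theorem refl (u : A) : AssocMod k I u u :=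
  ⟨1, one_ne_zero, by simp⟩

theorem symm (h : AssocMod k I u v) : AssocMod k I v u := by
  obtain ⟨c, hc, hI⟩ := h
  refine ⟨c⁻¹, inv_ne_zero hc, ?_⟩
  convert I.smul_mem (-c⁻¹) hI using 1
  rw [smul_sub, smul_smul, neg_mul, inv_mul_cancel₀ hc]
  module

theorem trans (h₁ : AssocMod k I u v) (h₂ : AssocMod k I v w) : AssocMod k I u w := by
  obtain ⟨c, hc, hI⟩ := h₁
  obtain ⟨d, hd, hI'⟩ := h₂
  refine ⟨c * d, mul_ne_zero hc hd, ?_⟩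
  convert I.add_mem hI (I.smul_mem c hI') using 1
  module

theorem mul_left (h : AssocMod k I u v) (x : A) : AssocMod k I (x * u) (x * v) := by
  obtain ⟨c, hc, hI⟩ := h
  exact ⟨c, hc, by simpa [mul_sub] using I.mul_mem_left x _ hI⟩

theorem mul_right (h : AssocMod k I u v) (x : A) : AssocMod k I (u * x) (v * x) := by
  obtain ⟨c, hc, hI⟩ := h
  exact ⟨c, hc, by simpa [sub_mul] using I.mul_mem_right _ x hI⟩

theorem mem_iff (h : AssocMod k I u v) {P : TwoSidedIdeal A} (hIP : I ≤ P) : u ∈ P ↔ v ∈ P := by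
  obtain ⟨c, hc, hI⟩ := h
  refine ⟨fun hu => ?_, fun hv => by simpa using P.add_mem (hIP hI) (P.smul_mem c hv)⟩
  simpa [smul_smul, inv_mul_cancel₀ hc] using P.smul_mem c⁻¹ (P.sub_mem hu (hIP hI))

end AssocMod

section QuotAnnihilator

variable {k A V : Type*} [CommRing k] [Ring A] [Algebra k A] [AddCommGroup V] [Module k V]

def quotAnnihilator (ρ : A →ₐ[k] Module.End k V) (W : Submodule k V)
    (hW : ∀ a, ∀ v ∈ W, ρ a v ∈ W) : TwoSidedIdeal A :=
  TwoSidedIdeal.mk' {a | ∀ v, ρ a v ∈ W} (by simp)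
    (fun ha hb v => by simpa using add_mem (ha v) (hb v))
    (fun ha v => by simpa using neg_mem (ha v))
    (fun {a _} hb v => by simpa using hW a _ (hb v))
    (fun {_ b} ha v => by simpa using ha (ρ b v))

theorem mem_quotAnnihilator {ρ : A →ₐ[k] Module.End k V} {W : Submodule k V}
    {hW : ∀ a, ∀ v ∈ W, ρ a v ∈ W} {a : A} : a ∈ quotAnnihilator ρ W hW ↔ ∀ v, ρ a v ∈ W :=
  TwoSidedIdeal.mem_mk' ..

end QuotAnnihilator

section Eigenvectors

variable {k V ι σ : Type*} [Field k] [AddCommGroup V] [Module k V]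

theorem mem_of_sum_mem_of_eigenvectors {p : Submodule k V} (Φ : ι → V →ₗ[k] V)
    (hΦ : ∀ i, ∀ x ∈ p, Φ i x ∈ p) (χ : σ → ι → k) (hχ : Function.Injective χ) (T : Finset σ)
    (v : σ → V) (hv : ∀ w i, Φ i (v w) = χ w i • v w) (hsum : ∑ w ∈ T, v w ∈ p) :
    ∀ w ∈ T, v w ∈ p := by
  classical
  induction T using Finset.strongInduction generalizing v with
  | H T ih =>
  intro w hw
  by_cases hT : ∃ w₁ ∈ T, w₁ ≠ w
  swap
  · push Not at hT
    rwa [Finset.sum_eq_single_of_mem w hw fun w' hw' hne => absurd (hT w' hw') hne] at hsum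
  obtain ⟨w₁, hw₁, hne⟩ := hT
  obtain ⟨i, hi⟩ : ∃ i, χ w₁ i ≠ χ w i := Function.ne_iff.1 (hχ.ne hne)
  set d := χ w₁ i
  -- `Φ i - d` kills the summands with eigenvalue `d`, among them `v w₁`, and rescales the others
  have hmem : ∑ w' ∈ T.filter (χ · i ≠ d), (χ w' i - d) • v w' ∈ p := by
    rw [Finset.sum_filter_of_ne fun w' _ h => by contrapose! h; simp [h]]
    convert p.sub_mem (hΦ i _ hsum) (p.smul_mem d hsum) using 1
    rw [map_sum, Finset.smul_sum, ← Finset.sum_sub_distrib]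
    simp only [hv, sub_smul]
  have hc : χ w i - d ≠ 0 := sub_ne_zero.2 hi.symm
  have := ih _ (Finset.filter_ssubset.2 ⟨w₁, hw₁, by simp [d]⟩) (fun w' => (χ w' i - d) • v w')
    (fun w' j => by rw [map_smul, hv, smul_comm]) hmem w (Finset.mem_filter.2 ⟨hw, hi.symm⟩)
  simpa [smul_smul, inv_mul_cancel₀ hc] using p.smul_mem (χ w i - d)⁻¹ this

end Eigenvectors

theorem exists_pow_ne_pow {k : Type*} [Field k] [Infinite k] {d d' : ℕ} (h : d ≠ d') :
    ∃ t : kˣ, (t : k) ^ d ≠ (t : k) ^ d' := by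
  obtain ⟨x, hx⟩ : ∃ x : k, x ^ (d + 1) ≠ x ^ (d' + 1) := by
    by_contra! hall
    have := Polynomial.funext (p := Polynomial.X ^ (d + 1)) (q := Polynomial.X ^ (d' + 1))
      (by simpa using hall)
    exact h (by simpa using congrArg Polynomial.natDegree this)
  have hx0 : x ≠ 0 := by rintro rfl; simp at hx
  exact ⟨Units.mk0 x hx0, fun h' => hx (by rw [pow_succ, pow_succ]; simp_all)⟩

namespace QMat

section Presentation

variable {k : Type} [Field k] {q : k} {m n : ℕ}

structure IsQMatFamily {B : Type*} [Ring B] [Algebra k B] (q : k) (f : Fin m → Fin n → B) :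
    Prop where
  col : ∀ {i l : Fin m} (j : Fin n), i < l → f i j * f l j = q • (f l j * f i j)
  row : ∀ (i : Fin m) {j s : Fin n}, j < s → f i j * f i s = q • (f i s * f i j)
  comm : ∀ {i l : Fin m} {j s : Fin n}, i < l → j < s → f i s * f l j = f l j * f i s
  mixed : ∀ {i l : Fin m} {j s : Fin n}, i < l → j < s →
    f i j * f l s - f l s * f i j = (q - q⁻¹) • (f i s * f l j)

theorem isQMatFamily_X : IsQMatFamily q (X k q m n) where
  col j h := by simpa [X] using RingQuot.mkAlgHom_rel k (MatRel.col (k := k) (q := q) (j := j) h)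
  row i _ _ h := by
    simpa [X] using RingQuot.mkAlgHom_rel k (MatRel.row (k := k) (q := q) (i := i) h)
  comm h₁ h₂ := by simpa [X] using RingQuot.mkAlgHom_rel k (MatRel.comm (k := k) (q := q) h₁ h₂)
  mixed h₁ h₂ := by simpa [X] using RingQuot.mkAlgHom_rel k (MatRel.mixed (k := k) (q := q) h₁ h₂)

variable {B : Type*} [Ring B] [Algebra k B] {f : Fin m → Fin n → B}

theorem IsQMatFamily.smul (hf : IsQMatFamily q f) (a : Fin m → k) (b : Fin n → k) :
    IsQMatFamily q fun i j => (a i * b j) • f i j where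
  col j h := by
    rw [smul_mul_smul_comm, smul_mul_smul_comm, hf.col j h, smul_smul, smul_smul, mul_comm q,
      mul_comm (a _ * _)]
  row i _ _ h := by
    rw [smul_mul_smul_comm, smul_mul_smul_comm, hf.row i h, smul_smul, smul_smul, mul_comm q,
      mul_comm (a _ * _)]
  comm h₁ h₂ := by
    rw [smul_mul_smul_comm, smul_mul_smul_comm, hf.comm h₁ h₂]
    congr 1
    ring
  mixed {i l j s} h₁ h₂ := by
    rw [smul_mul_smul_comm, smul_mul_smul_comm, smul_mul_smul_comm, mul_comm (a l * b s),
      ← smul_sub, hf.mixed h₁ h₂, smul_smul, smul_smul]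
    congr 1
    ring

def lift (hf : IsQMatFamily q f) : QMat k q m n →ₐ[k] B :=
  RingQuot.liftAlgHom k ⟨FreeAlgebra.lift k fun p => f p.1 p.2, fun _ _ h => by
    induction h with
    | col h => simpa using hf.col _ h
    | row h => simpa using hf.row _ h
    | comm h₁ h₂ => simpa using hf.comm h₁ h₂
    | mixed h₁ h₂ => simpa using hf.mixed h₁ h₂⟩

@[simp]
theorem lift_X (hf : IsQMatFamily q f) (i : Fin m) (j : Fin n) :
    lift hf (X k q m n i j) = f i j := by
  rw [lift, X, RingQuot.liftAlgHom_mkAlgHom_apply, FreeAlgebra.lift_ι_apply]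

theorem algHom_ext_s18 {φ ψ : QMat k q m n →ₐ[k] B}
    (h : ∀ i j, φ (X k q m n i j) = ψ (X k q m n i j)) : φ = ψ :=
  RingQuot.ringQuot_ext' _ _ _ <| FreeAlgebra.hom_ext <| funext fun p => h p.1 p.2

end Presentation

abbrev Weight (m n : ℕ) : Type := Multiset (Fin m) × Multiset (Fin n)

def weight {m n : ℕ} (L : List (Fin m × Fin n)) : Weight m n :=
  (L.map Prod.fst, L.map Prod.snd)

section Monomials

variable {k : Type} [Field k] {q : k} {m n : ℕ}

@[simp]
theorem weight_nil : weight ([] : List (Fin m × Fin n)) = 0 := rfl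

@[simp]
theorem weight_cons (p : Fin m × Fin n) (L : List (Fin m × Fin n)) :
    weight (p :: L) = (p.1 ::ₘ (weight L).1, p.2 ::ₘ (weight L).2) := rfl

@[simp]
theorem weight_append (L L' : List (Fin m × Fin n)) : weight (L ++ L') = weight L + weight L' := by
  simp [weight]

theorem card_weight_fst (L : List (Fin m × Fin n)) :
    Multiset.card (weight L).1 = Multiset.card (weight L).2 := by
  simp [weight]

theorem length_eq_of_weight_eq {L L' : List (Fin m × Fin n)} (h : weight L = weight L') :
    L.length = L'.length := by
  simpa [weight] using congrArg (fun w => Multiset.card w.1) h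

theorem weight_cons_cons_max_min (p p' : Fin m × Fin n) (L : List (Fin m × Fin n)) :
    weight ((max p.1 p'.1, min p.2 p'.2) :: (min p.1 p'.1, max p.2 p'.2) :: L) =
      weight (p :: p' :: L) := by
  rcases le_total p.1 p'.1 with h₁ | h₁ <;> rcases le_total p.2 p'.2 with h₂ | h₂ <;>
    simp [h₁, h₂, Multiset.cons_swap]

theorem exists_weight_eq {a : Multiset (Fin m)} {b : Multiset (Fin n)}
    (h : Multiset.card a = Multiset.card b) : ∃ L, weight L = (a, b) := by
  have h' : a.toList.length = b.toList.length := by simpa using h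
  exact ⟨a.toList.zip b.toList, by simp [weight, List.map_fst_zip h'.le, List.map_snd_zip h'.ge]⟩

@[simp]
theorem matMono_nil : matMono k q m n [] = 1 := rfl

theorem matMono_cons (p : Fin m × Fin n) (L : List (Fin m × Fin n)) :
    matMono k q m n (p :: L) = X k q m n p.1 p.2 * matMono k q m n L := by
  simp [matMono]

theorem matMono_append (L L' : List (Fin m × Fin n)) :
    matMono k q m n (L ++ L') = matMono k q m n L * matMono k q m n L' := by
  simp [matMono]

@[simp]
theorem matMono_singleton (p : Fin m × Fin n) : matMono k q m n [p] = X k q m n p.1 p.2 := by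
  simp [matMono]

theorem span_range_matMono : Submodule.span k (Set.range (matMono k q m n)) = ⊤ := by
  rw [eq_top_iff]
  rintro u -
  obtain ⟨a, rfl⟩ := RingQuot.mkAlgHom_surjective k (MatRel k q m n) u
  induction a using FreeAlgebra.induction with
  | grade0 r =>
    rw [AlgHom.commutes, Algebra.algebraMap_eq_smul_one]
    exact Submodule.smul_mem _ _ (Submodule.subset_span ⟨[], rfl⟩)
  | grade1 p => exact Submodule.subset_span ⟨[p], matMono_singleton p⟩
  | mul a b ha hb =>
    rw [map_mul]
    have hmul := Submodule.mul_mem_mul ha hb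
    rw [Submodule.span_mul_span] at hmul
    refine Submodule.span_mono ?_ hmul
    rintro _ ⟨_, ⟨L, rfl⟩, _, ⟨L', rfl⟩, rfl⟩
    exact ⟨L ++ L', matMono_append L L'⟩
  | add a b ha hb => rw [map_add]; exact add_mem ha hb

@[elab_as_elim]
theorem matMono_induction {motive : QMat k q m n → Prop} (mono : ∀ L, motive (matMono k q m n L))
    (add : ∀ x y, motive x → motive y → motive (x + y))
    (smul : ∀ (c : k) x, motive x → motive (c • x)) (u : QMat k q m n) : motive u := by
  have hu : u ∈ Submodule.span k (Set.range (matMono k q m n)) := by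
    rw [span_range_matMono]; trivial
  induction hu using Submodule.span_induction with
  | mem _ h => obtain ⟨L, rfl⟩ := h; exact mono L
  | zero => simpa using smul 0 _ (mono [])
  | add x y _ _ hx hy => exact add x y hx hy
  | smul c x _ hx => exact smul c x hx

end Monomials

section Straightening

variable {k : Type} [Field k] {q : k} {m n : ℕ}

local notation "𝕏" => X k q m n

theorem minor_mem_I₁ {i l : Fin m} {j s : Fin n} (h₁ : i < l) (h₂ : j < s) :
    𝕏 i j * 𝕏 l s - q • (𝕏 i s * 𝕏 l j) ∈ I₁ k q m n :=
  TwoSidedIdeal.subset_span ⟨i, l, j, s, h₁, h₂, rfl⟩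

theorem assocMod_X_mul_X (hq : q ≠ 0) (i l : Fin m) (j s : Fin n) :
    AssocMod k (I₁ k q m n) (𝕏 i j * 𝕏 l s) (𝕏 (max i l) (min j s) * 𝕏 (min i l) (max j s)) := by
  have hX := isQMatFamily_X (k := k) (q := q) (m := m) (n := n)
  rcases le_or_gt l i with hli | hil
  · rcases le_or_gt j s with hjs | hsj
    · rw [max_eq_left hli, min_eq_left hjs, min_eq_right hli, max_eq_right hjs]
      exact .refl _
    rw [max_eq_left hli, min_eq_right hsj.le, min_eq_right hli, max_eq_left hsj.le]
    refine ⟨q⁻¹, inv_ne_zero hq, ?_⟩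
    rcases hli.lt_or_eq with hli | rfl
    · convert minor_mem_I₁ (k := k) hli hsj using 1
      rw [sub_eq_iff_eq_add.1 (hX.mixed hli hsj), hX.comm hli hsj]
      module
    · rw [hX.row l hsj, smul_smul, inv_mul_cancel₀ hq, one_smul, sub_self]
      exact zero_mem _
  · rw [max_eq_right hil.le, min_eq_left hil.le]
    rcases lt_trichotomy j s with hjs | rfl | hsj
    · rw [min_eq_left hjs.le, max_eq_right hjs.le, ← hX.comm hil hjs]
      exact ⟨q, hq, minor_mem_I₁ hil hjs⟩
    · rw [min_self, max_self, hX.col j hil]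
      exact ⟨q, hq, by simp⟩
    · rw [min_eq_right hsj.le, max_eq_left hsj.le, hX.comm hil hsj]
      exact .refl _

theorem exists_assocMod_cons_extremal (hq : q ≠ 0) (p : Fin m × Fin n) (L : List (Fin m × Fin n)) :
    ∃ p₀ L₀, AssocMod k (I₁ k q m n) (matMono k q m n (p :: L)) (matMono k q m n (p₀ :: L₀)) ∧
      weight (p₀ :: L₀) = weight (p :: L) ∧
      (∀ i ∈ (weight (p :: L)).1, i ≤ p₀.1) ∧ ∀ j ∈ (weight (p :: L)).2, p₀.2 ≤ j := by
  induction L generalizing p with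
  | nil => exact ⟨p, [], .refl _, rfl, by simp, by simp⟩
  | cons p' L ih =>
    obtain ⟨p₁, L₁, hassoc, hw, hrow, hcol⟩ := ih p'
    refine ⟨(max p.1 p₁.1, min p.2 p₁.2), (min p.1 p₁.1, max p.2 p₁.2) :: L₁, ?_, ?_, ?_, ?_⟩
    · rw [matMono_cons p, matMono_cons _ (_ :: L₁), matMono_cons _ L₁, ← mul_assoc]
      refine (hassoc.mul_left _).trans ?_
      rw [matMono_cons p₁, ← mul_assoc]
      exact (assocMod_X_mul_X hq _ _ _ _).mul_right _
    · rw [weight_cons_cons_max_min, weight_cons p, weight_cons p, hw]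
    · simp only [weight_cons, Multiset.mem_cons, le_max_iff] at hrow ⊢
      rintro i (rfl | hi)
      · exact Or.inl le_rfl
      · exact Or.inr (hrow i hi)
    · simp only [weight_cons, Multiset.mem_cons, min_le_iff] at hcol ⊢
      rintro j (rfl | hj)
      · exact Or.inl le_rfl
      · exact Or.inr (hcol j hj)

theorem assocMod_of_weight_eq (hq : q ≠ 0) {L L' : List (Fin m × Fin n)}
    (h : weight L = weight L') :
    AssocMod k (I₁ k q m n) (matMono k q m n L) (matMono k q m n L') := by
  induction hN : L.length using Nat.strong_induction_on generalizing L L' with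
  | _ N ih =>
  match L, L', length_eq_of_weight_eq h with
  | [], [], _ => exact .refl _
  | p :: L, p' :: L', _ =>
    obtain ⟨a, M, hM, hwM, hrow, hcol⟩ := exists_assocMod_cons_extremal hq p L
    obtain ⟨a', M', hM', hwM', hrow', hcol'⟩ := exists_assocMod_cons_extremal hq p' L'
    have hmem : a.1 ∈ (weight (p :: L)).1 ∧ a.2 ∈ (weight (p :: L)).2 := by
      simp [← hwM]
    have hmem' : a'.1 ∈ (weight (p' :: L')).1 ∧ a'.2 ∈ (weight (p' :: L')).2 := by
      simp [← hwM']
    rw [h] at hmem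
    rw [← h] at hmem'
    obtain rfl : a = a' := Prod.ext (le_antisymm (hrow' _ hmem.1) (hrow _ hmem'.1))
      (le_antisymm (hcol _ hmem'.2) (hcol' _ hmem.2))
    have hMM : weight M = weight M' := by
      have := hwM.trans (h.trans hwM'.symm)
      simp only [weight_cons, Prod.mk.injEq, Multiset.cons_inj_right] at this
      exact Prod.ext this.1 this.2
    have hlen : M.length < N := by
      have := length_eq_of_weight_eq hwM
      simp only [List.length_cons] at this hN
      omega
    refine hM.trans (AssocMod.trans ?_ hM'.symm)
    rw [matMono_cons, matMono_cons]
    exact (ih _ hlen hMM rfl).mul_left _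

theorem matMono_mem_of_weight_le (hq : q ≠ 0) {P : TwoSidedIdeal (QMat k q m n)}
    (hP : I₁ k q m n ≤ P) {L L' : List (Fin m × Fin n)} (hL : matMono k q m n L ∈ P)
    (hle : weight L ≤ weight L') : matMono k q m n L' ∈ P := by
  obtain ⟨M, hM⟩ := exists_weight_eq (a := (weight L').1 - (weight L).1)
    (b := (weight L').2 - (weight L).2) (by
      rw [Multiset.card_sub hle.1, Multiset.card_sub hle.2, card_weight_fst, card_weight_fst])
  have hw : weight (L ++ M) = weight L' := by
    rw [weight_append, hM]
    exact Prod.ext (add_tsub_cancel_of_le hle.1) (add_tsub_cancel_of_le hle.2)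
  rw [← (assocMod_of_weight_eq hq hw).mem_iff hP, matMono_append]
  exact P.mul_mem_right _ _ hL

end Straightening

section Torus

variable {k : Type} [Field k] {q : k} {m n : ℕ}

local notation "𝕏" => X k q m n

def torusHom (a : Fin m → k) (b : Fin n → k) : QMat k q m n →ₐ[k] QMat k q m n :=
  lift (isQMatFamily_X.smul a b)

@[simp]
theorem torusHom_X (a : Fin m → k) (b : Fin n → k) (i : Fin m) (j : Fin n) :
    torusHom (q := q) a b (𝕏 i j) = (a i * b j) • 𝕏 i j :=
  lift_X _ i j

theorem torusHom_comp_torusHom (a a' : Fin m → k) (b b' : Fin n → k) :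
    (torusHom (q := q) a b).comp (torusHom a' b') = torusHom (a * a') (b * b') :=
  algHom_ext_s18 fun i j => by
    simp only [AlgHom.comp_apply, torusHom_X, map_smul, smul_smul, Pi.mul_apply]
    ring_nf

theorem torusHom_one : torusHom (q := q) (m := m) (n := n) 1 1 = AlgHom.id k _ :=
  algHom_ext_s18 fun i j => by simp

/-- The action of `(α, β) ∈ H`. -/
def torusAut (α : Fin m → kˣ) (β : Fin n → kˣ) : QMat k q m n ≃ₐ[k] QMat k q m n :=
  AlgEquiv.ofAlgHom (torusHom (fun i => α i) (fun j => β j))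
    (torusHom (fun i => ↑(α i)⁻¹) (fun j => ↑(β j)⁻¹))
    (by rw [torusHom_comp_torusHom, ← torusHom_one]; congr <;> ext <;> simp)
    (by rw [torusHom_comp_torusHom, ← torusHom_one]; congr <;> ext <;> simp)

@[simp]
theorem torusAut_X (α : Fin m → kˣ) (β : Fin n → kˣ) (i : Fin m) (j : Fin n) :
    torusAut (q := q) α β (𝕏 i j) = ((α i : k) * (β j : k)) • 𝕏 i j :=
  torusHom_X _ _ i j

theorem isHInvariant_iff {P : TwoSidedIdeal (QMat k q m n)} :
    IsHInvariant k q m n P ↔ ∀ α β, ∀ a ∈ P, torusAut α β a ∈ P := by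
  refine ⟨fun hP α β => hP α β _ (torusAut_X α β), fun hP α β φ hφ a ha => ?_⟩
  obtain rfl : φ = torusAut α β :=
    AlgEquiv.coe_toAlgHom_injective (algHom_ext_s18 fun i j => by simp [hφ])
  exact hP α β a ha

theorem isHInvariant_span {S : Set (QMat k q m n)}
    (hS : ∀ α β, ∀ s ∈ S, ∃ c : k, torusAut α β s = c • s) :
    IsHInvariant k q m n (TwoSidedIdeal.span S) := by
  refine isHInvariant_iff.2 fun α β a ha => ?_
  induction ha using TwoSidedIdeal.span_induction with
  | mem s hs =>
    obtain ⟨c, hc⟩ := hS α β s hs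
    exact hc ▸ TwoSidedIdeal.smul_mem c (TwoSidedIdeal.subset_span hs)
  | zero => simp
  | add _ _ _ _ hx hy => rw [map_add]; exact add_mem hx hy
  | neg _ _ hx => rw [map_neg]; exact neg_mem hx
  | left_absorb _ _ _ hx => rw [map_mul]; exact TwoSidedIdeal.mul_mem_left _ _ _ hx
  | right_absorb _ _ _ hx => rw [map_mul]; exact TwoSidedIdeal.mul_mem_right _ _ _ hx

theorem isHInvariant_sup {P Q : TwoSidedIdeal (QMat k q m n)} (hP : IsHInvariant k q m n P)
    (hQ : IsHInvariant k q m n Q) : IsHInvariant k q m n (P ⊔ Q) := by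
  refine isHInvariant_iff.2 fun α β a ha => ?_
  obtain ⟨y, hy, z, hz, rfl⟩ := TwoSidedIdeal.mem_sup.1 ha
  rw [map_add]
  exact TwoSidedIdeal.mem_sup.2 ⟨_, isHInvariant_iff.1 hP α β y hy, _,
    isHInvariant_iff.1 hQ α β z hz, rfl⟩

def weightChar (α : Fin m → kˣ) (β : Fin n → kˣ) (w : Weight m n) : k :=
  (w.1.map fun i => (α i : k)).prod * (w.2.map fun j => (β j : k)).prod

theorem torusAut_matMono (α : Fin m → kˣ) (β : Fin n → kˣ) (L : List (Fin m × Fin n)) :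
    torusAut α β (matMono k q m n L) = weightChar α β (weight L) • matMono k q m n L := by
  induction L with
  | nil => simp [weightChar]
  | cons p L ih =>
    rw [matMono_cons, map_mul, torusAut_X, ih, smul_mul_smul_comm]
    congr 1
    simp only [weightChar, weight_cons, Multiset.map_cons, Multiset.prod_cons]
    ring

theorem weightChar_mulSingle_one (i : Fin m) (t : kˣ) (w : Weight m n) :
    weightChar (Pi.mulSingle i t) 1 w = (t : k) ^ w.1.count i := by
  rw [weightChar, Multiset.prod_map_eq_pow_single i fun i' hi' _ => by
    simp [Pi.mulSingle_eq_of_ne hi']]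
  simp

theorem weightChar_one_mulSingle (j : Fin n) (t : kˣ) (w : Weight m n) :
    weightChar 1 (Pi.mulSingle j t) w = (t : k) ^ w.2.count j := by
  have := Multiset.prod_map_eq_pow_single (m := w.2)
    (f := fun j' => (((Pi.mulSingle j t : Fin n → kˣ) j' : kˣ) : k)) j fun j' hj' _ => by
      simp [Pi.mulSingle_eq_of_ne hj']
  simp_all [weightChar]

theorem weightChar_injective [Infinite k] :
    Function.Injective fun (w : Weight m n) (αβ : (Fin m → kˣ) × (Fin n → kˣ)) =>
      weightChar αβ.1 αβ.2 w := by
  intro w w' h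
  have key : ∀ α β, weightChar α β w = weightChar α β w' := fun α β => congrFun h (α, β)
  refine Prod.ext (Multiset.ext.2 fun i => ?_) (Multiset.ext.2 fun j => ?_)
  · by_contra hne
    obtain ⟨t, ht⟩ := exists_pow_ne_pow (k := k) hne
    exact ht (by simpa [weightChar_mulSingle_one] using key (Pi.mulSingle i t) 1)
  · by_contra hne
    obtain ⟨t, ht⟩ := exists_pow_ne_pow (k := k) hne
    exact ht (by simpa [weightChar_one_mulSingle] using key 1 (Pi.mulSingle j t))

end Torus

section WeightSpaces

variable {k : Type} [Field k] {q : k} {m n : ℕ}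

def weightSpace (k : Type) [Field k] (q : k) (m n : ℕ) (w : Weight m n) :
    Submodule k (QMat k q m n) :=
  Submodule.span k (matMono k q m n '' {L | weight L = w})

theorem torusAut_of_mem_weightSpace (α : Fin m → kˣ) (β : Fin n → kˣ) {w : Weight m n}
    {u : QMat k q m n} (hu : u ∈ weightSpace k q m n w) :
    torusAut α β u = weightChar α β w • u := by
  induction hu using Submodule.span_induction with
  | mem _ h => obtain ⟨L, rfl, rfl⟩ := h; exact torusAut_matMono α β L
  | zero => simp
  | add x y _ _ hx hy => rw [map_add, hx, hy, smul_add]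
  | smul c x _ hx => rw [map_smul, hx, smul_comm]

theorem exists_finsupp_weightSpace (u : QMat k q m n) :
    ∃ f : Weight m n →₀ QMat k q m n, (∀ w, f w ∈ weightSpace k q m n w) ∧
      f.sum (fun _ x => x) = u := by
  have hu : u ∈ ⨆ w, weightSpace k q m n w := by
    simp_rw [weightSpace]
    rw [← Submodule.span_iUnion, ← Set.image_iUnion]
    rw [Set.iUnion_eq_univ_iff.2 fun L => ⟨weight L, rfl⟩, Set.image_univ, span_range_matMono]
    trivial
  exact (Submodule.mem_iSup_iff_exists_finsupp _ u).1 hu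

theorem mem_of_finsupp_sum_mem_of_isHInvariant [Infinite k] {P : TwoSidedIdeal (QMat k q m n)}
    (hP : IsHInvariant k q m n P) {f : Weight m n →₀ QMat k q m n}
    (hf : ∀ w, f w ∈ weightSpace k q m n w) (hsum : f.sum (fun _ x => x) ∈ P) (w : Weight m n) :
    f w ∈ P := by
  by_cases hw : w ∈ f.support
  · have := mem_of_sum_mem_of_eigenvectors (p := P.asIdeal.restrictScalars k)
      (fun αβ : (Fin m → kˣ) × (Fin n → kˣ) => (torusAut (q := q) αβ.1 αβ.2).toLinearMap)
      (fun αβ x hx => by simpa using isHInvariant_iff.1 hP αβ.1 αβ.2 x (by simpa using hx))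
      (fun w (αβ : (Fin m → kˣ) × (Fin n → kˣ)) => weightChar αβ.1 αβ.2 w) weightChar_injective
      f.support f
      (fun w αβ => by
        rw [AlgEquiv.toLinearMap_apply]
        exact torusAut_of_mem_weightSpace αβ.1 αβ.2 (hf w))
      hsum w hw
    simpa using this
  · rw [Finsupp.notMem_support_iff.1 hw]
    exact zero_mem _

theorem mem_I₁_or_assocMod_of_mem_weightSpace (hq : q ≠ 0) {w : Weight m n} {u : QMat k q m n}
    (hu : u ∈ weightSpace k q m n w) :
    u ∈ I₁ k q m n ∨ ∃ L, AssocMod k (I₁ k q m n) u (matMono k q m n L) := by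
  by_cases hw : ∃ L₀, weight L₀ = w
  swap
  · push Not at hw
    have : weightSpace k q m n w = ⊥ := by simp [weightSpace, hw]
    exact Or.inl ((Submodule.mem_bot k).1 (this ▸ hu) ▸ zero_mem _)
  obtain ⟨L₀, rfl⟩ := hw
  have : ∃ c : k, u - c • matMono k q m n L₀ ∈ I₁ k q m n := by
    induction hu using Submodule.span_induction with
    | mem _ h =>
      obtain ⟨L, hL, rfl⟩ := h
      obtain ⟨c, -, hc⟩ := assocMod_of_weight_eq hq hL
      exact ⟨c, hc⟩
    | zero => exact ⟨0, by simp⟩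
    | add x y _ _ hx hy =>
      obtain ⟨c, hc⟩ := hx
      obtain ⟨d, hd⟩ := hy
      exact ⟨c + d, by convert add_mem hc hd using 1; module⟩
    | smul a x _ hx =>
      obtain ⟨c, hc⟩ := hx
      exact ⟨a * c, by convert TwoSidedIdeal.smul_mem a hc using 1; module⟩
  obtain ⟨c, hc⟩ := this
  rcases eq_or_ne c 0 with rfl | hc0
  · exact Or.inl (by simpa using hc)
  · exact Or.inr ⟨L₀, c, hc0, hc⟩

theorem le_of_forall_matMono_mem [Infinite k] (hq : q ≠ 0) {Q P : TwoSidedIdeal (QMat k q m n)}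
    (hQ : IsHInvariant k q m n Q) (hQ₁ : I₁ k q m n ≤ Q) (hP₁ : I₁ k q m n ≤ P)
    (h : ∀ L, matMono k q m n L ∈ Q → matMono k q m n L ∈ P) : Q ≤ P := by
  intro u hu
  obtain ⟨f, hf, rfl⟩ := exists_finsupp_weightSpace u
  refine TwoSidedIdeal.finsuppSum_mem _ _ fun w _ => ?_
  rcases mem_I₁_or_assocMod_of_mem_weightSpace hq (hf w) with h₁ | ⟨L, hL⟩
  · exact hP₁ h₁
  · have hw := mem_of_finsupp_sum_mem_of_isHInvariant hQ hf hu w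
    exact (hL.mem_iff hP₁).2 (h L ((hL.mem_iff hQ₁).1 hw))

end WeightSpaces

section Representation

variable {k : Type} [Field k] {q : k} {m n : ℕ}

def numAbove (p : Fin m × Fin n) (w : Weight m n) : ℕ :=
  Multiset.card (w.1.filter (p.1 < ·)) + Multiset.card (w.2.filter (p.2 < ·))

theorem weight_singleton (p : Fin m × Fin n) : weight [p] = ({p.1}, {p.2}) := rfl

theorem numAbove_add_weight_singleton (p p' : Fin m × Fin n) (w : Weight m n) :
    numAbove p (w + weight [p']) =
      numAbove p w + (if p.1 < p'.1 then 1 else 0) + (if p.2 < p'.2 then 1 else 0) := by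
  simp only [numAbove, weight_singleton, Prod.fst_add, Prod.snd_add, Multiset.filter_add,
    Multiset.card_add, Multiset.filter_singleton]
  split_ifs <;> simp <;> omega

/-- Left multiplication by `y_i ⊗ z_j` on `O_q(k^m) ⊗ O_q(k^n)`, where the basis vector of
weight `w` stands for the monomial `y^{w.1} ⊗ z^{w.2}` with indices in decreasing order: moving
`y_i` and `z_j` into place costs a factor `q` for each larger index they pass. -/
def genOp (q : k) (p : Fin m × Fin n) : (Weight m n →₀ k) →ₗ[k] (Weight m n →₀ k) :=
  Finsupp.lsum k fun w => q ^ numAbove p w • Finsupp.lsingle (w + weight [p])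

theorem genOp_single (p : Fin m × Fin n) (w : Weight m n) (c : k) :
    genOp q p (Finsupp.single w c) = q ^ numAbove p w • Finsupp.single (w + weight [p]) c := by
  simp [genOp]

theorem genOp_genOp_single (p p' : Fin m × Fin n) (w : Weight m n) (c : k) :
    genOp q p (genOp q p' (Finsupp.single w c)) =
      q ^ (numAbove p' w + numAbove p w + (if p.1 < p'.1 then 1 else 0) +
        (if p.2 < p'.2 then 1 else 0)) • Finsupp.single (w + weight [p'] + weight [p]) c := by
  rw [genOp_single, map_smul, genOp_single, numAbove_add_weight_singleton, smul_smul, ← pow_add]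
  congr 2
  ring

theorem weight_corners (i l : Fin m) (j s : Fin n) (w : Weight m n) :
    w + weight [(l, s)] + weight [(i, j)] = w + weight [(l, j)] + weight [(i, s)] := by
  simp only [weight_singleton, Prod.ext_iff, Prod.fst_add, Prod.snd_add, true_and]
  exact add_right_comm _ _ _

theorem numAbove_corners (i l : Fin m) (j s : Fin n) (w : Weight m n) :
    numAbove (i, j) w + numAbove (l, s) w = numAbove (i, s) w + numAbove (l, j) w := by
  simp only [numAbove]
  omega

theorem isQMatFamily_genOp (hq : q ≠ 0) :
    IsQMatFamily q fun i j => genOp (m := m) (n := n) q (i, j) where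
  col {i l} j h := Finsupp.lhom_ext fun w c => by
    simp only [Module.End.mul_apply, LinearMap.smul_apply, genOp_genOp_single, smul_smul,
      ← pow_succ', if_pos h, if_neg h.not_gt, lt_irrefl, if_false]
    rw [add_right_comm w (weight [(i, j)])]
    congr 2
    omega
  row i {j s} h := Finsupp.lhom_ext fun w c => by
    simp only [Module.End.mul_apply, LinearMap.smul_apply, genOp_genOp_single, smul_smul,
      ← pow_succ', if_pos h, if_neg h.not_gt, lt_irrefl, if_false]
    rw [add_right_comm w (weight [(i, j)])]
    congr 2
    omega
  comm {i l j s} h₁ h₂ := Finsupp.lhom_ext fun w c => by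
    simp only [Module.End.mul_apply, genOp_genOp_single, if_pos h₁, if_neg h₁.not_gt,
      if_pos h₂, if_neg h₂.not_gt]
    rw [add_right_comm w (weight [(i, s)])]
    congr 2
    omega
  mixed {i l j s} h₁ h₂ := Finsupp.lhom_ext fun w c => by
    simp only [LinearMap.sub_apply, Module.End.mul_apply, LinearMap.smul_apply,
      genOp_genOp_single, if_pos h₁, if_neg h₁.not_gt, if_pos h₂, if_neg h₂.not_gt, smul_smul]
    rw [add_right_comm w (weight [(i, j)]), weight_corners, ← sub_smul]
    congr 1
    have key : ∀ a b c : ℕ, a = c + 1 → c = b + 1 → q ^ a - q ^ b = (q - q⁻¹) * q ^ c := by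
      rintro a b c rfl rfl
      field_simp
      ring
    have := numAbove_corners i l j s w
    exact key _ _ _ (by omega) (by omega)

def rep (hq : q ≠ 0) : QMat k q m n →ₐ[k] Module.End k (Weight m n →₀ k) :=
  lift (isQMatFamily_genOp hq)

theorem rep_minor (hq : q ≠ 0) {i l : Fin m} {j s : Fin n} (h₁ : i < l) (h₂ : j < s) :
    rep hq (X k q m n i j * X k q m n l s - q • (X k q m n i s * X k q m n l j)) = 0 :=
  Finsupp.lhom_ext fun w c => by
    simp only [rep, map_sub, map_smul, map_mul, lift_X, LinearMap.sub_apply, LinearMap.smul_apply,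
      Module.End.mul_apply, genOp_genOp_single, if_pos h₁, if_pos h₂, if_neg h₂.not_gt,
      smul_smul, LinearMap.zero_apply]
    rw [weight_corners, ← sub_smul, ← pow_succ', sub_eq_zero_of_eq, zero_smul]
    have := numAbove_corners i l j s w
    congr 1
    omega

theorem rep_matMono_single (hq : q ≠ 0) (L : List (Fin m × Fin n)) (w : Weight m n) (c : k) :
    ∃ t : ℕ, rep hq (matMono k q m n L) (Finsupp.single w c) =
      q ^ t • Finsupp.single (w + weight L) c := by
  induction L with
  | nil => exact ⟨0, by simp⟩
  | cons p L ih =>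
    obtain ⟨t, ht⟩ := ih
    refine ⟨t + numAbove p (w + weight L), ?_⟩
    rw [matMono_cons, map_mul, Module.End.mul_apply, ht, map_smul, rep, lift_X, Prod.mk.eta,
      genOp_single, smul_smul, ← pow_add, add_assoc, add_comm (weight L), ← weight_append,
      List.singleton_append]

end Representation

section IdealPIJ

variable {k : Type} [Field k] {q : k} {m n : ℕ} {I : Finset (Fin m)} {J : Finset (Fin n)}

local notation "𝕏" => X k q m n

def Meets (I : Finset (Fin m)) (J : Finset (Fin n)) (w : Weight m n) : Prop :=
  (∃ i ∈ w.1, i ∈ I) ∨ ∃ j ∈ w.2, j ∈ J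

theorem meets_add {w w' : Weight m n} : Meets I J (w + w') ↔ Meets I J w ∨ Meets I J w' := by
  simp only [Meets, Prod.fst_add, Prod.snd_add, Multiset.mem_add, or_and_right, exists_or]
  exact or_or_or_comm

theorem not_meets_zero : ¬ Meets I J 0 := by
  simp [Meets]

theorem I₁_le_PIJ (I : Finset (Fin m)) (J : Finset (Fin n)) : I₁ k q m n ≤ PIJ k q m n I J :=
  le_sup_left.trans le_sup_left

theorem X_mem_PIJ {i : Fin m} {j : Fin n} (h : i ∈ I ∨ j ∈ J) : 𝕏 i j ∈ PIJ k q m n I J := by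
  rcases h with hi | hj
  · exact TwoSidedIdeal.mem_sup_left (TwoSidedIdeal.mem_sup_right
      (TwoSidedIdeal.subset_span ⟨i, j, hi, rfl⟩))
  · exact TwoSidedIdeal.mem_sup_right (TwoSidedIdeal.subset_span ⟨i, j, hj, rfl⟩)

theorem PIJ_le_iff {P : TwoSidedIdeal (QMat k q m n)} :
    PIJ k q m n I J ≤ P ↔
      I₁ k q m n ≤ P ∧ (∀ i ∈ I, ∀ j, 𝕏 i j ∈ P) ∧ ∀ j ∈ J, ∀ i, 𝕏 i j ∈ P := by
  simp only [PIJ, sup_le_iff, TwoSidedIdeal.span_le, Set.subset_def, Set.mem_ofPred_eq,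
    SetLike.mem_coe]
  constructor
  · rintro ⟨⟨h₁, hI⟩, hJ⟩
    exact ⟨h₁, fun i hi j => hI _ ⟨i, j, hi, rfl⟩, fun j hj i => hJ _ ⟨i, j, hj, rfl⟩⟩
  · rintro ⟨h₁, hI, hJ⟩
    exact ⟨⟨h₁, by rintro _ ⟨i, j, hi, rfl⟩; exact hI i hi j⟩,
      by rintro _ ⟨i, j, hj, rfl⟩; exact hJ j hj i⟩

theorem matMono_mem_PIJ_of_meets {L : List (Fin m × Fin n)} (h : Meets I J (weight L)) :
    matMono k q m n L ∈ PIJ k q m n I J := by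
  refine TwoSidedIdeal.listProd_mem _ _ _ ?_
  rcases h with ⟨i, hi, hI⟩ | ⟨j, hj, hJ⟩
  · obtain ⟨p, hp, rfl⟩ := List.mem_map.1 (Multiset.mem_coe.1 hi)
    exact ⟨p, hp, X_mem_PIJ (Or.inl hI)⟩
  · obtain ⟨p, hp, rfl⟩ := List.mem_map.1 (Multiset.mem_coe.1 hj)
    exact ⟨p, hp, X_mem_PIJ (Or.inr hJ)⟩

theorem genOp_mem_supported_meets_of_meets {i : Fin m} {j : Fin n} (h : i ∈ I ∨ j ∈ J)
    (v : Weight m n →₀ k) : genOp q (i, j) v ∈ Finsupp.supported k k {w | Meets I J w} := by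
  induction v using Finsupp.induction_linear with
  | zero => simp
  | add _ _ hx hy => rw [map_add]; exact add_mem hx hy
  | single w c =>
    rw [genOp_single]
    refine Submodule.smul_mem _ _ (Finsupp.single_mem_supported k _ (meets_add.2 (Or.inr ?_)))
    rcases h with hi | hj
    · exact Or.inl ⟨i, by simp, hi⟩
    · exact Or.inr ⟨j, by simp, hj⟩

theorem genOp_mem_supported_meets (p : Fin m × Fin n) {v : Weight m n →₀ k}
    (hv : v ∈ Finsupp.supported k k {w | Meets I J w}) :
    genOp q p v ∈ Finsupp.supported k k {w | Meets I J w} := by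
  rw [Finsupp.supported_eq_span_single] at hv ⊢
  induction hv using Submodule.span_induction with
  | mem _ h =>
    obtain ⟨w, hw, rfl⟩ := h
    rw [genOp_single]
    exact Submodule.smul_mem _ _ (Submodule.subset_span ⟨_, meets_add.2 (Or.inl hw), rfl⟩)
  | zero => simp
  | add _ _ _ _ hx hy => rw [map_add]; exact add_mem hx hy
  | smul c _ _ hx => rw [map_smul]; exact Submodule.smul_mem _ _ hx

theorem rep_mem_supported_meets (hq : q ≠ 0) (a : QMat k q m n) {v : Weight m n →₀ k}
    (hv : v ∈ Finsupp.supported k k {w | Meets I J w}) :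
    rep hq a v ∈ Finsupp.supported k k {w | Meets I J w} := by
  induction a using matMono_induction with
  | mono L =>
    induction L with
    | nil => simpa using hv
    | cons p L ih =>
      rw [matMono_cons, map_mul, Module.End.mul_apply, rep, lift_X]
      exact genOp_mem_supported_meets _ ih
  | add x y hx hy => rw [map_add, LinearMap.add_apply]; exact add_mem hx hy
  | smul c x hx => rw [map_smul, LinearMap.smul_apply]; exact Submodule.smul_mem _ _ hx

theorem PIJ_le_quotAnnihilator (hq : q ≠ 0) (I : Finset (Fin m)) (J : Finset (Fin n)) :
    PIJ k q m n I J ≤ quotAnnihilator (rep hq) (Finsupp.supported k k {w | Meets I J w})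
      fun a _ hv => rep_mem_supported_meets hq a hv := by
  refine PIJ_le_iff.2 ⟨TwoSidedIdeal.span_le.2 ?_, ?_, ?_⟩
  · rintro _ ⟨i, l, j, s, h₁, h₂, rfl⟩
    exact mem_quotAnnihilator.2 fun v => by simp [rep_minor hq h₁ h₂]
  · exact fun i hi j => mem_quotAnnihilator.2 fun v => by
      simpa [rep] using genOp_mem_supported_meets_of_meets (Or.inl hi) v
  · exact fun j hj i => mem_quotAnnihilator.2 fun v => by
      simpa [rep] using genOp_mem_supported_meets_of_meets (Or.inr hj) v

theorem matMono_mem_PIJ_iff (hq : q ≠ 0) {L : List (Fin m × Fin n)} :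
    matMono k q m n L ∈ PIJ k q m n I J ↔ Meets I J (weight L) := by
  refine ⟨fun h => ?_, matMono_mem_PIJ_of_meets⟩
  have hmem := mem_quotAnnihilator.1 (PIJ_le_quotAnnihilator hq I J h) (Finsupp.single 0 1)
  obtain ⟨t, ht⟩ := rep_matMono_single hq L 0 1
  rw [ht, zero_add] at hmem
  by_contra hL
  simpa [hq] using (Finsupp.mem_supported' _ _).1 hmem (weight L) hL

end IdealPIJ

section HPrime

variable {k : Type} [Field k] {q : k} {m n : ℕ}

local notation "𝕏" => X k q m n

theorem isHInvariant_I₁ : IsHInvariant k q m n (I₁ k q m n) := by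
  refine isHInvariant_span fun α β _ ⟨i, l, j, s, _, _, h⟩ => ⟨α i * β j * (α l * β s), ?_⟩
  subst h
  simp only [map_sub, map_smul, map_mul, torusAut_X, smul_mul_smul_comm]
  module

theorem isHInvariant_PIJ (I : Finset (Fin m)) (J : Finset (Fin n)) :
    IsHInvariant k q m n (PIJ k q m n I J) :=
  isHInvariant_sup
    (isHInvariant_sup isHInvariant_I₁
      (isHInvariant_span fun α β _ ⟨i, j, _, h⟩ => ⟨_, h ▸ torusAut_X α β i j⟩))
    (isHInvariant_span fun α β _ ⟨i, j, _, h⟩ => ⟨_, h ▸ torusAut_X α β i j⟩)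

theorem isHInvariant_span_matMono (L : List (Fin m × Fin n)) :
    IsHInvariant k q m n (TwoSidedIdeal.span {matMono k q m n L}) :=
  isHInvariant_span fun α β _ h => ⟨_, (Set.mem_singleton_iff.1 h) ▸ torusAut_matMono α β L⟩

theorem matMono_mem_or_of_isHPrime {P : TwoSidedIdeal (QMat k q m n)} (hP : IsHPrime k q m n P)
    {g g' : List (Fin m × Fin n)} (h : ∀ M, matMono k q m n (g ++ M ++ g') ∈ P) :
    matMono k q m n g ∈ P ∨ matMono k q m n g' ∈ P := by
  have hz : ∀ z, matMono k q m n g * z * matMono k q m n g' ∈ P := by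
    intro z
    induction z using matMono_induction with
    | mono M => rw [← matMono_append, ← matMono_append]; exact h M
    | add x y hx hy => rw [mul_add, add_mul]; exact add_mem hx hy
    | smul c x hx => rw [mul_smul_comm, smul_mul_assoc]; exact TwoSidedIdeal.smul_mem c hx
  refine (hP.2.2 _ _ (isHInvariant_span_matMono g) (isHInvariant_span_matMono g')
    fun a ha b hb => TwoSidedIdeal.mul_mem_of_forall_mul_mul_mem hz ha hb).imp ?_ ?_ <;>
  exact fun hle => hle (TwoSidedIdeal.subset_span rfl)

theorem exists_X_mem_of_isHPrime (hq : q ≠ 0) {P : TwoSidedIdeal (QMat k q m n)}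
    (hP : IsHPrime k q m n P) (hP₁ : I₁ k q m n ≤ P) {L : List (Fin m × Fin n)}
    (hL : matMono k q m n L ∈ P) : ∃ p ∈ L, 𝕏 p.1 p.2 ∈ P := by
  induction L with
  | nil => exact absurd ((TwoSidedIdeal.one_mem_iff P).1 hL) hP.2.1
  | cons p L ih =>
    have h : ∀ M, matMono k q m n ([p] ++ M ++ L) ∈ P := fun M =>
      matMono_mem_of_weight_le hq hP₁ hL (by simp)
    rcases matMono_mem_or_of_isHPrime hP h with hp | hL'
    · exact ⟨p, List.mem_cons_self, by simpa using hp⟩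
    · obtain ⟨p', hp', hX⟩ := ih hL'
      exact ⟨p', List.mem_cons_of_mem _ hp', hX⟩

theorem X_mem_or_X_mem_of_isHPrime (hq : q ≠ 0) {P : TwoSidedIdeal (QMat k q m n)}
    (hP : IsHPrime k q m n P) (hP₁ : I₁ k q m n ≤ P) {i : Fin m} {j : Fin n} (h : 𝕏 i j ∈ P)
    (i' : Fin m) (j' : Fin n) : 𝕏 i j' ∈ P ∨ 𝕏 i' j ∈ P := by
  have h' : ∀ M, matMono k q m n ([(i, j')] ++ M ++ [(i', j)]) ∈ P := fun M =>
    matMono_mem_of_weight_le (L := [(i, j)]) hq hP₁ (by simpa using h) (by simp)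
  simpa using matMono_mem_or_of_isHPrime hP h'

theorem eq_PIJ_of_isHPrime [Infinite k] (hq : q ≠ 0) {P : TwoSidedIdeal (QMat k q m n)}
    (hP : IsHPrime k q m n P) (hP₁ : I₁ k q m n ≤ P) :
    ∃ (I : Finset (Fin m)) (J : Finset (Fin n)), P = PIJ k q m n I J := by
  classical
  set I := Finset.univ.filter fun i => ∀ j, 𝕏 i j ∈ P
  set J := Finset.univ.filter fun j => ∀ i, 𝕏 i j ∈ P
  have hX : ∀ i j, 𝕏 i j ∈ P → 𝕏 i j ∈ PIJ k q m n I J := by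
    refine fun i j h => X_mem_PIJ ?_
    by_contra! hij
    obtain ⟨j', hj'⟩ : ∃ j', 𝕏 i j' ∉ P := by simpa [I] using hij.1
    obtain ⟨i', hi'⟩ : ∃ i', 𝕏 i' j ∉ P := by simpa [J] using hij.2
    exact (X_mem_or_X_mem_of_isHPrime hq hP hP₁ h i' j').elim hj' hi'
  refine ⟨I, J, le_antisymm ?_ (PIJ_le_iff.2 ⟨hP₁, ?_, ?_⟩)⟩
  · refine le_of_forall_matMono_mem hq hP.1 hP₁ (I₁_le_PIJ I J) fun L hL => ?_
    obtain ⟨p, hp, hXp⟩ := exists_X_mem_of_isHPrime hq hP hP₁ hL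
    exact TwoSidedIdeal.listProd_mem _ _ _ ⟨p, hp, hX _ _ hXp⟩
  · exact fun i hi => (Finset.mem_filter.1 hi).2
  · exact fun j hj => (Finset.mem_filter.1 hj).2

theorem exists_matMono_mem_sup_not_mem [Infinite k] (hq : q ≠ 0)
    {Q P : TwoSidedIdeal (QMat k q m n)} (hQ : IsHInvariant k q m n Q) (hP₁ : I₁ k q m n ≤ P)
    (hQP : ¬ Q ≤ P) : ∃ L, matMono k q m n L ∈ Q ⊔ I₁ k q m n ∧ matMono k q m n L ∉ P := by
  by_contra! h
  exact hQP (le_sup_left.trans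
    (le_of_forall_matMono_mem hq (isHInvariant_sup hQ isHInvariant_I₁) le_sup_right hP₁ h))

theorem isHPrime_PIJ [Infinite k] (hq : q ≠ 0) (I : Finset (Fin m)) (J : Finset (Fin n)) :
    IsHPrime k q m n (PIJ k q m n I J) := by
  refine ⟨isHInvariant_PIJ I J, fun htop => ?_, fun Q R hQ hR hQR => ?_⟩
  · have h1 : matMono k q m n [] ∈ PIJ k q m n I J := by rw [htop]; trivial
    exact not_meets_zero ((matMono_mem_PIJ_iff hq).1 h1)
  by_contra! h
  obtain ⟨L, hLQ, hLP⟩ := exists_matMono_mem_sup_not_mem hq hQ (I₁_le_PIJ I J) h.1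
  obtain ⟨L', hL'R, hL'P⟩ := exists_matMono_mem_sup_not_mem hq hR (I₁_le_PIJ I J) h.2
  have hprod : matMono k q m n (L ++ L') ∈ PIJ k q m n I J := by
    obtain ⟨a, ha, b, hb, hab⟩ := TwoSidedIdeal.mem_sup.1 hLQ
    obtain ⟨a', ha', b', hb', hab'⟩ := TwoSidedIdeal.mem_sup.1 hL'R
    have hI₁ := I₁_le_PIJ (q := q) I J
    rw [matMono_append, ← hab, ← hab', add_mul, mul_add]
    exact add_mem (add_mem (hQR a ha a' ha') ((PIJ k q m n I J).mul_mem_left _ _ (hI₁ hb')))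
      ((PIJ k q m n I J).mul_mem_right _ _ (hI₁ hb))
  rw [matMono_mem_PIJ_iff hq, weight_append, meets_add, ← matMono_mem_PIJ_iff hq,
    ← matMono_mem_PIJ_iff hq] at hprod
  exact hprod.elim hLP hL'P

end HPrime

end QMat

/-- Over an infinite field, the `H`-prime ideals of `O_q(M_{m,n}(k))`
containing `I₁` are precisely the ideals `P(I,J)`. -/
theorem HPrime_containing_I1_iff (k : Type) [Field k] [Infinite k] (q : k) (hq : q ≠ 0)
    (m n : ℕ) (P : TwoSidedIdeal (QMat k q m n)) :
    (IsHPrime k q m n P ∧ I₁ k q m n ≤ P) ↔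
      ∃ (I : Finset (Fin m)) (J : Finset (Fin n)), P = PIJ k q m n I J := by
  constructor
  · rintro ⟨hP, hP₁⟩
    exact QMat.eq_PIJ_of_isHPrime hq hP hP₁
  · rintro ⟨I, J, rfl⟩
    exact ⟨QMat.isHPrime_PIJ hq I J, QMat.I₁_le_PIJ I J⟩
end
end
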